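/- arXiv:1902.02995 — 6 statements merged into one kernel-verified Lean document; each statement's English description precedes it below -/
import Mathlib

section
/- For all positive integers m and n, the integral over [0,1] of β(mx)·β(nx) dx equals gcd(m,n)²/(12·m·n), where β(t) = t - ⌊t⌋ - 1/2. -/
/-
Write `m = g m'`, `n = g n'` with `g = gcd m n`. The substitution `y = g x` and the 1-periodicity
of `β` remove `g`, so let `m, n` be coprime. Substituting `y = m x` and folding `[0, m]` onto
`[0, 1]` turns the integral into `(1/m) ∫₀¹ β(y) ∑_{j<m} β(n y / m + n j / m) dy`.
As `j ↦ n j mod m` permutes the residues mod `m`, Hermite's identity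
`∑_{j<k} β(t + j/k) = β(k t)` collapses the sum to `β(n y)`. Thus
`∫ β(m x) β(n x) = (∫ β(x) β(n x)) / m`; applied twice, this leaves `∫₀¹ β² = 1/12`.
-/

noncomputable def beta (t : ℝ) : ℝ := t - ⌊t⌋ - 1/2

open Finset Function MeasureTheory

theorem Function.Periodic.sum_range_add_mul_div_of_coprime {M : Type*} [AddCommMonoid M]
    {φ : ℝ → M} (hφ : Periodic φ 1) {a k : ℕ} (hak : Nat.Coprime a k) (s : ℝ) :
    ∑ j ∈ range k, φ (s + a * j / k) = ∑ j ∈ range k, φ (s + j / k) := by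
  rcases k.eq_zero_or_pos with rfl | hk
  · simp
  have hmod (j : ℕ) : φ (s + a * j / k) = φ (s + ((a * j % k : ℕ) : ℝ) / k) := by
    have hdiv : (a * j : ℝ) / k = ((a * j % k : ℕ) : ℝ) / k + ((a * j / k : ℕ) : ℝ) := by
      have := Nat.mod_add_div (a * j) k
      field_simp
      exact_mod_cast (by linarith : a * j = a * j % k + k * (a * j / k))
    rw [hdiv, ← add_assoc, ← mul_one ((a * j / k : ℕ) : ℝ), hφ.nat_mul]
  have hmaps : Set.MapsTo (fun j => a * j % k) (range k : Set ℕ) (range k) :=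
    fun j _ => mem_range.2 (Nat.mod_lt _ hk)
  have hinj : Set.InjOn (fun j => a * j % k) (range k : Set ℕ) := by
    intro i hi j hj hij
    have := Nat.ModEq.cancel_left_of_coprime hak.symm.gcd_eq_one hij
    rwa [Nat.ModEq, Nat.mod_eq_of_lt (mem_range.1 hi), Nat.mod_eq_of_lt (mem_range.1 hj)] at this
  exact (sum_congr rfl fun j _ => hmod j).trans <| sum_nbij _ hmaps hinj
    (surjOn_of_injOn_of_card_le _ hmaps hinj le_rfl) fun _ _ => rfl

theorem intervalIntegral_zero_natCast_eq_integral_sum {E : Type*} [NormedAddCommGroup E]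
    [NormedSpace ℝ E] {f : ℝ → E} (hf : ∀ a b, IntervalIntegrable f volume a b) (k : ℕ) :
    ∫ x in (0:ℝ)..k, f x = ∫ x in (0:ℝ)..1, ∑ j ∈ range k, f (x + j) := by
  have hshift (j : ℕ) : IntervalIntegrable (fun x => f (x + j)) volume 0 1 := by
    simpa using (hf j (j + 1)).comp_add_right (j : ℝ)
  rw [intervalIntegral.integral_finsetSum fun j _ => hshift j, ← Nat.cast_zero,
    ← intervalIntegral.sum_integral_adjacent_intervals fun j _ => hf _ _]
  refine sum_congr rfl fun j _ => ?_
  rw [intervalIntegral.integral_comp_add_right, Nat.cast_zero, zero_add, Nat.cast_succ, add_comm]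

theorem Function.Periodic.intervalIntegral_comp_natCast_mul {E : Type*} [NormedAddCommGroup E]
    [NormedSpace ℝ E] {f : ℝ → E} (hper : Periodic f 1)
    (hf : ∀ a b, IntervalIntegrable f volume a b) {k : ℕ} (hk : 0 < k) :
    ∫ x in (0:ℝ)..1, f (k * x) = ∫ x in (0:ℝ)..1, f x := by
  have hk' : (k : ℝ) ≠ 0 := by positivity
  have := hper.intervalIntegral_add_zsmul_eq k 0 hf
  simp only [zero_add, natCast_zsmul, nsmul_eq_mul, mul_one] at this
  rw [intervalIntegral.integral_comp_mul_left _ hk', mul_zero, mul_one, this,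
    ← Nat.cast_smul_eq_nsmul ℝ, smul_smul, inv_mul_cancel₀ hk', one_smul]

theorem beta_eq_fract_sub (t : ℝ) : beta t = Int.fract t - 1 / 2 := rfl

theorem beta_periodic : Periodic beta 1 := by
  intro t
  simp [beta_eq_fract_sub]

theorem beta_add_natCast (t : ℝ) (k : ℕ) : beta (t + k) = beta t := by
  simpa using beta_periodic.nat_mul k t

theorem beta_of_mem_Ico {t : ℝ} (ht : t ∈ Set.Ico 0 1) : beta t = t - 1 / 2 := by
  rw [beta_eq_fract_sub, Int.fract_eq_self.2 ht]

theorem abs_beta_le (t : ℝ) : |beta t| ≤ 1 / 2 := by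
  rw [beta_eq_fract_sub, abs_le]
  constructor <;> linarith [Int.fract_nonneg t, Int.fract_lt_one t]

theorem measurable_beta : Measurable beta := measurable_fract.sub_const _

theorem intervalIntegrable_beta_comp_mul_beta_comp {g h : ℝ → ℝ} (hg : Measurable g)
    (hh : Measurable h) (a b : ℝ) :
    IntervalIntegrable (fun x => beta (g x) * beta (h x)) volume a b := by
  refine (intervalIntegrable_const (c := (1 / 2 * (1 / 2) : ℝ))).mono_fun' ?_ ?_
  · exact ((measurable_beta.comp hg).mul (measurable_beta.comp hh)).aestronglyMeasurable
  · refine Filter.Eventually.of_forall fun x => ?_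
    show ‖beta (g x) * beta (h x)‖ ≤ 1 / 2 * (1 / 2)
    rw [Real.norm_eq_abs, abs_mul]
    exact mul_le_mul (abs_beta_le _) (abs_beta_le _) (abs_nonneg _) (by norm_num)

theorem integral_beta_mul_self : ∫ x in (0:ℝ)..1, beta x * beta x = 1 / 12 := by
  have h : ∫ x in (0:ℝ)..1, beta x * beta x = ∫ x in (0:ℝ)..1, (x - 1 / 2) ^ 2 := by
    rw [intervalIntegral.integral_of_le zero_le_one, intervalIntegral.integral_of_le zero_le_one,
      integral_Ioc_eq_integral_Ioo, integral_Ioc_eq_integral_Ioo]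
    refine setIntegral_congr_fun measurableSet_Ioo fun x hx => ?_
    rw [beta_of_mem_Ico (Set.Ioo_subset_Ico_self hx), sq]
  rw [h, intervalIntegral.integral_comp_sub_right (fun x => x ^ 2), integral_pow]
  norm_num

theorem sum_range_beta_add_div {k : ℕ} (hk : 0 < k) (t : ℝ) :
    ∑ j ∈ range k, beta (t + j / k) = beta (k * t) := by
  have hk' : (0 : ℝ) < k := by exact_mod_cast hk
  set G : ℝ → ℝ := fun t => ∑ j ∈ range k, beta (t + j / k) - beta (k * t) with hG
  -- shifting `t` by `1 / k` rotates the summands cyclically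
  have hper : Periodic G (1 / k) := by
    intro t
    have hrot := (sum_range_succ' (fun j : ℕ => beta (t + j / k)) k).symm.trans
      (sum_range_succ (fun j : ℕ => beta (t + j / k)) k)
    have hwrap : beta (t + k / k) = beta (t + (0 : ℕ) / k) := by
      rw [div_self hk'.ne', Nat.cast_zero, zero_div, add_zero, beta_periodic]
    rw [hwrap, add_left_inj] at hrot
    simp only [hG, ← hrot, mul_add, mul_one_div_cancel hk'.ne', beta_periodic (k * t),
      Nat.cast_succ, add_div, add_assoc, add_comm (1 / (k : ℝ))]
  have hbase (s : ℝ) (hs : s ∈ Set.Ico (0 : ℝ) (1 / k)) : G s = 0 := by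
    obtain ⟨hs0, hs1⟩ := hs
    have hks : k * s < 1 := by rwa [lt_div_iff₀' hk'] at hs1
    have hterm (j : ℕ) (hj : j ∈ range k) : beta (s + j / k) = s + j / k - 1 / 2 := by
      have hj' : (j : ℝ) + 1 ≤ k := by exact_mod_cast mem_range.1 hj
      have hjk : (j : ℝ) / k + 1 / k ≤ 1 := by rwa [← add_div, div_le_one hk']
      exact beta_of_mem_Ico ⟨by positivity, by linarith⟩
    have hgauss : (∑ j ∈ range k, (j : ℝ)) * 2 = k * (k - 1) := by
      rw [← Nat.cast_pred hk, ← Nat.cast_sum, ← Nat.cast_ofNat, ← Nat.cast_mul,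
        ← Nat.cast_mul, sum_range_id_mul_two]
    simp only [hG, sum_congr rfl hterm, sum_sub_distrib, sum_add_distrib, ← sum_div,
      beta_of_mem_Ico ⟨by positivity, hks⟩, sum_const, card_range, nsmul_eq_mul]
    field_simp
    linarith
  have hdecomp : t = Int.fract (k * t) / k + ⌊k * t⌋ * (1 / k) := by
    field_simp
    rw [Int.fract_add_floor]
  have hs : Int.fract (k * t) / k ∈ Set.Ico (0 : ℝ) (1 / k) :=
    ⟨by positivity, div_lt_div_of_pos_right (Int.fract_lt_one _) hk'⟩
  have hGt := hper.int_mul ⌊k * t⌋ (Int.fract (k * t) / k)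
  rw [← hdecomp, hbase _ hs] at hGt
  exact sub_eq_zero.1 hGt

theorem integral_beta_mul_beta_of_coprime {m n : ℕ} (hm : 0 < m) (hmn : Nat.Coprime n m) :
    ∫ x in (0:ℝ)..1, beta (m * x) * beta (n * x)
      = (∫ x in (0:ℝ)..1, beta x * beta (n * x)) / m := by
  have hm' : (m : ℝ) ≠ 0 := by positivity
  have hf : ∀ a b, IntervalIntegrable (fun y => beta y * beta (n * y / m)) volume a b :=
    intervalIntegrable_beta_comp_mul_beta_comp measurable_id (by fun_prop)
  have hsum (y : ℝ) : ∑ j ∈ range m, beta (y + j) * beta (n * (y + j) / m)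
      = beta y * beta (n * y) := by
    calc ∑ j ∈ range m, beta (y + j) * beta (n * (y + j) / m)
        = beta y * ∑ j ∈ range m, beta (n * y / m + n * j / m) := by
          rw [mul_sum]
          refine sum_congr rfl fun j _ => ?_
          rw [beta_add_natCast, mul_add, add_div]
      _ = beta y * beta (n * y) := by
          rw [beta_periodic.sum_range_add_mul_div_of_coprime hmn, sum_range_beta_add_div hm,
            mul_div_cancel₀ _ hm']
  have hcomp (x : ℝ) : beta (m * x) * beta (n * x) = beta (m * x) * beta (n * (m * x) / m) := by
    rw [mul_left_comm, mul_div_cancel_left₀ _ hm']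
  rw [intervalIntegral.integral_congr fun x _ => hcomp x,
    intervalIntegral.integral_comp_mul_left (fun y => beta y * beta (n * y / m)) hm', mul_zero,
    mul_one, intervalIntegral_zero_natCast_eq_integral_sum hf, smul_eq_mul, inv_mul_eq_div]
  simp only [hsum]

theorem stmt_0 (m n : ℕ) (hm : 0 < m) (hn : 0 < n) :
    ∫ x in (0:ℝ)..1, beta (m * x) * beta (n * x)
      = (Nat.gcd m n : ℝ)^2 / (12 * m * n) := by
  obtain ⟨g, m', n', hg, hco, rfl, rfl⟩ := Nat.exists_coprime' (Nat.gcd_pos_of_pos_left n hm)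
  have hm' : 0 < m' := Nat.pos_of_mul_pos_right hm
  have hn' : 0 < n' := Nat.pos_of_mul_pos_right hn
  have hscale : ∫ x in (0:ℝ)..1, beta (↑(m' * g) * x) * beta (↑(n' * g) * x)
      = ∫ x in (0:ℝ)..1, beta (m' * x) * beta (n' * x) := by
    have hper : Periodic (fun y => beta (m' * y) * beta (n' * y)) 1 := fun y => by
      simp only [mul_add, mul_one, beta_add_natCast]
    simpa only [Nat.cast_mul, mul_assoc, mul_comm (g : ℝ)] using
      hper.intervalIntegral_comp_natCast_mul
        (intervalIntegrable_beta_comp_mul_beta_comp (by fun_prop) (by fun_prop)) hg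
  have hswap := integral_beta_mul_beta_of_coprime hn' (Nat.coprime_one_left n')
  simp only [Nat.cast_one, one_mul, integral_beta_mul_self] at hswap
  rw [hscale, integral_beta_mul_beta_of_coprime hm' hco.symm,
    intervalIntegral.integral_congr fun x _ => mul_comm (beta x) _, hswap,
    Nat.gcd_mul_right, hco.gcd_eq_one, one_mul]
  push_cast
  field_simp
end

section
/- For 0 < t ≤ 1 a real number and n a positive integer, B_n(t) = η̃(tn) - (⌊tn⌋/n)·B⁻_{⌊tn⌋}(1/t - ⌊1/t⌋) + (tn - ⌊tn⌋)/(2n), where B⁻ denotes the left-hand limit, B_n(s) = (1/n)·Σ_{k=1}^{n} β(ks) with β(s) = s - ⌊s⌋ - 1/2, and η̃(x) = (x - ⌊x⌋)(x - ⌊x⌋ - 1)/(2x) for x ≠ 0, η̃(0) = -1/2. (If ⌊tn⌋ = 0 the second term is interpreted as 0.) -/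
noncomputable def B (m : ℕ) (s : ℝ) : ℝ :=
  (1/(m : ℝ)) * ∑ k ∈ Finset.Icc 1 m, beta (k * s)

noncomputable def eta (x : ℝ) : ℝ :=
  if x = 0 then -1/2 else (x - ⌊x⌋) * (x - ⌊x⌋ - 1) / (2*x)

open Finset Filter Topology

section
variable {K : Type*}

theorem card_Icc_filter_natCast_le [Semiring K] [LinearOrder K] [FloorSemiring K] {x : K}
    (hx : 0 ≤ x) {m : ℕ} (h : ⌊x⌋₊ ≤ m) :
    #((Icc 1 m).filter (fun j : ℕ ↦ (j : K) ≤ x)) = ⌊x⌋₊ := by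
  have : (Icc 1 m).filter (fun j : ℕ ↦ (j : K) ≤ x) = Icc 1 ⌊x⌋₊ := by
    ext j
    simp only [mem_filter, mem_Icc, ← Nat.le_floor_iff hx]
    omega
  simp [this]

theorem card_range_filter_natCast_lt [Semiring K] [LinearOrder K] [FloorSemiring K] {y : K}
    {N : ℕ} (h : ⌈y⌉₊ ≤ N) :
    #((range N).filter (fun k : ℕ ↦ (k : K) < y)) = ⌈y⌉₊ := by
  have : (range N).filter (fun k : ℕ ↦ (k : K) < y) = range ⌈y⌉₊ := by
    ext k
    simp only [mem_filter, mem_range, ← Nat.lt_ceil]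
    omega
  simp [this]

theorem sum_floor_mul_add_sum_ceil_div [Field K] [LinearOrder K] [IsStrictOrderedRing K]
    [FloorSemiring K] {t : K} (ht : 0 < t) (n : ℕ) :
    ∑ k ∈ range (n + 1), ⌊k * t⌋₊ + ∑ j ∈ Icc 1 ⌊t * n⌋₊, ⌈j / t⌉₊ = ⌊t * n⌋₊ * (n + 1) := by
  set m := ⌊t * n⌋₊
  have hfloor_eq_card : ∀ k ∈ range (n + 1),
      ⌊k * t⌋₊ = #((Icc 1 m).filter (fun j : ℕ ↦ (j : K) ≤ k * t)) := by
    intro k hk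
    have hkn : (k : K) ≤ n := by exact_mod_cast Nat.lt_succ_iff.1 (mem_range.1 hk)
    refine (card_Icc_filter_natCast_le (by positivity) (Nat.floor_mono ?_)).symm
    nlinarith
  have hceil_eq_card : ∀ j ∈ Icc 1 m,
      ⌈j / t⌉₊ = #((range (n + 1)).filter (fun k : ℕ ↦ ¬ (j : K) ≤ k * t)) := by
    intro j hj
    have hjm : (j : K) ≤ t * n :=
      (Nat.cast_le.2 (mem_Icc.1 hj).2).trans (Nat.floor_le (by positivity))
    simp_rw [not_le, ← lt_div_iff₀ ht]
    refine (card_range_filter_natCast_lt ?_).symm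
    exact (Nat.ceil_le.2 ((div_le_iff₀ ht).2 (by linarith))).trans n.le_succ
  have hswap : ∑ k ∈ range (n + 1), #((Icc 1 m).filter (fun j : ℕ ↦ (j : K) ≤ k * t))
      = ∑ j ∈ Icc 1 m, #((range (n + 1)).filter (fun k : ℕ ↦ (j : K) ≤ k * t)) :=
    sum_card_bipartiteAbove_eq_sum_card_bipartiteBelow _
  rw [sum_congr rfl hfloor_eq_card, sum_congr rfl hceil_eq_card, hswap, ← sum_add_distrib]
  simp_rw [card_filter_add_card_filter_not]
  simp

theorem sum_Icc_natCast [Field K] [CharZero K] (n : ℕ) :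
    ∑ k ∈ Icc 1 n, (k : K) = n * (n + 1) / 2 := by
  induction n with
  | zero => simp
  | succ n ih =>
    rw [sum_Icc_succ_top (by omega), ih]
    push_cast
    ring

end

noncomputable def betaLeft (y : ℝ) : ℝ := y - ⌈y⌉ + 1 / 2

theorem tendsto_beta_nhdsLT (y : ℝ) : Tendsto beta (𝓝[<] y) (𝓝 (betaLeft y)) := by
  have hfloor : Tendsto (fun s : ℝ ↦ (⌊s⌋ : ℝ)) (𝓝[<] y) (𝓝 ((⌈y⌉ - 1 : ℤ) : ℝ)) :=
    ((tendsto_pure_pure _ _).comp (tendsto_floor_left_pure_ceil_sub_one y)).mono_right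
      (pure_le_nhds _)
  convert ((tendsto_id.mono_left nhdsWithin_le_nhds).sub hfloor).sub_const (1 / 2) using 2
  · rfl
  · push_cast [betaLeft]
    ring

theorem betaLeft_add_intCast (y : ℝ) (z : ℤ) : betaLeft (y + z) = betaLeft y := by
  simp only [betaLeft, Int.ceil_add_intCast, Int.cast_add]
  ring

theorem tendsto_B_nhdsLT (m : ℕ) (x : ℝ) :
    Tendsto (B m) (𝓝[<] x) (𝓝 (1 / m * ∑ k ∈ Icc 1 m, betaLeft (k * x))) :=
  (tendsto_finsetSum _ fun _ hk ↦ (tendsto_beta_nhdsLT _).comp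
    (TendstoNhdsWithinIio.const_mul (Nat.cast_pos.2 (mem_Icc.1 hk).1) tendsto_id)).const_mul _

theorem sum_beta_add_sum_betaLeft {t : ℝ} (ht : 0 < t) (n : ℕ) :
    ∑ k ∈ Icc 1 n, beta (k * t) + ∑ j ∈ Icc 1 ⌊t * n⌋₊, betaLeft (j / t)
      = (t * n - ⌊t * n⌋₊) * (t * n - ⌊t * n⌋₊ - 1) / (2 * t) + (t * n - ⌊t * n⌋₊) / 2 := by
  set m := ⌊t * n⌋₊
  have hrec : ∑ k ∈ Icc 1 n, (⌊k * t⌋ : ℝ) + ∑ j ∈ Icc 1 m, (⌈j / t⌉ : ℝ) = m * (n + 1) := by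
    have := congrArg (Nat.cast : ℕ → ℝ) (sum_floor_mul_add_sum_ceil_div ht n)
    rw [Nat.range_succ_eq_Icc_zero, ← insert_Icc_add_one_left_eq_Icc n.zero_le,
      sum_insert (by simp)] at this
    push_cast at this
    rw [← this]
    simp only [CharP.cast_eq_zero, zero_mul, Nat.floor_zero, zero_add]
    congr 1
    · exact sum_congr rfl fun k _ ↦ (natCast_floor_eq_intCast_floor (by positivity)).symm
    · exact sum_congr rfl fun j _ ↦ (natCast_ceil_eq_intCast_ceil (by positivity)).symm
  simp only [beta, betaLeft, sum_add_distrib, sum_sub_distrib, ← sum_mul, ← sum_div,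
    sum_Icc_natCast, sum_const, Nat.card_Icc, nsmul_eq_mul, Nat.add_sub_cancel]
  rw [eq_sub_of_add_eq hrec]
  field_simp
  ring

theorem sum_betaLeft_mul_fract (m : ℕ) (y : ℝ) :
    ∑ j ∈ Icc 1 m, betaLeft (j * Int.fract y) = ∑ j ∈ Icc 1 m, betaLeft (j * y) := by
  refine sum_congr rfl fun j _ ↦ ?_
  rw [← betaLeft_add_intCast _ (j * ⌊y⌋), Int.fract]
  push_cast
  congr 1
  ring

theorem stmt_6_general (t : ℝ) (ht0 : 0 < t) (n : ℕ) (hn : 0 < n)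
    (L : ℝ)
    (hL : Filter.Tendsto (fun s => B ⌊t * n⌋₊ s)
      (nhdsWithin (1/t - ⌊1/t⌋) (Set.Iio (1/t - ⌊1/t⌋))) (nhds L)) :
    B n t = eta (t * n) - ((⌊t * n⌋₊ : ℝ) / n) * L
      + (t * n - ⌊t * n⌋₊) / (2 * n) := by
  have hsum := sum_beta_add_sum_betaLeft ht0 n
  set m := ⌊t * n⌋₊
  have htn : 0 < t * n := by positivity
  have hmL : m * L = ∑ j ∈ Icc 1 m, betaLeft (j / t) := by
    rw [tendsto_nhds_unique hL (tendsto_B_nhdsLT m _), Int.self_sub_floor,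
      sum_betaLeft_mul_fract]
    rcases m.eq_zero_or_pos with hm0 | hm0
    · simp [hm0]
    · field_simp
  have hn' : (n : ℝ) ≠ 0 := by positivity
  have hnB : n * B n t = ∑ k ∈ Icc 1 n, beta (k * t) := by
    rw [B, ← mul_assoc, mul_one_div_cancel hn', one_mul]
  have heta : eta (t * n) = (t * n - m) * (t * n - m - 1) / (2 * (t * n)) := by
    rw [eta, if_neg htn.ne', ← natCast_floor_eq_intCast_floor htn.le]
  rw [← hnB, ← hmL] at hsum
  rw [heta]
  field_simp at hsum ⊢
  linear_combination hsum

theorem stmt_6 (t : ℝ) (ht0 : 0 < t) (ht1 : t ≤ 1) (n : ℕ) (hn : 0 < n)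
    (L : ℝ)
    (hL : Filter.Tendsto (fun s => B ⌊t * n⌋₊ s)
      (nhdsWithin (1/t - ⌊1/t⌋) (Set.Iio (1/t - ⌊1/t⌋))) (nhds L)) :
    B n t = eta (t * n) - ((⌊t * n⌋₊ : ℝ) / n) * L
      + (t * n - ⌊t * n⌋₊) / (2 * n) :=
  stmt_6_general t ht0 n hn L hL
end

section
/- Let α₁,…,α_m be positive integers and let J* = (0,1) \ ℚ. For t ∈ J* define ϑ₀(t) = t and ϑ_j(t) = 1/(ϑ_{j-1}(t) - ⌊ϑ_{j-1}(t)⌋) for j ≥ 1. Let M = { t ∈ J* : ϑ_j(t) < α_j for all j = 1,…,m }. Then the Lebesgue measure of M satisfies ∏_{j=1}^m (1 - 1/α_j)² ≤ |M| ≤ ∏_{j=1}^m (1 - 1/α_j). -/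
/-!
Weight Lebesgue measure on `(0,1)` by `(1 + y x)⁻²` for a parameter `0 ≤ y ≤ 1`. The set for
`m + 1` constraints is the disjoint union over `1 ≤ a < α₁` of the images of the set for the shifted
sequence under `x ↦ 1/(a + x)`, and this substitution turns the weight with parameter `y` into
`(a + y)⁻²` times the weight with parameter `1/(a + y)`, again in `[0,1]`. Hence the bounds
`P² / (1 + y) ≤ ∫ ≤ P / (1 + y)`, with `P = ∏ (1 - 1/α_j)`, propagate by induction on `m`: the
sum over `a` telescopes to `1/(1 + y) - 1/(α₁ + y)`, which lies between `(1 - 1/α₁)² / (1 + y)` and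
`(1 - 1/α₁) / (1 + y)`. At `y = 0` the weighted measure is Lebesgue measure.
-/

open MeasureTheory

/-- Complete quotients: ϑ₀(t) = t, ϑ_{j+1}(t) = 1/(ϑ_j(t) - ⌊ϑ_j(t)⌋). -/
noncomputable def theta : ℕ → ℝ → ℝ
  | 0, t => t
  | (j+1), t => 1 / Int.fract (theta j t)

open Set

theorem theta_add (i j : ℕ) (t : ℝ) : theta (i + j) t = theta i (theta j t) := by
  induction i with
  | zero => rw [zero_add]; rfl
  | succ i ih => rw [Nat.add_right_comm, theta, ih, theta]

theorem theta_succ (j : ℕ) (t : ℝ) : theta (j + 1) t = theta j (1 / Int.fract t) :=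
  theta_add j 1 t

theorem theta_natCast_add {j : ℕ} (hj : 1 ≤ j) (a : ℕ) (x : ℝ) : theta j (a + x) = theta j x := by
  obtain ⟨k, rfl⟩ := Nat.exists_eq_add_of_le' hj
  rw [theta_succ, theta_succ, Int.fract_natCast_add]

theorem theta_succ_inv {u : ℝ} (hu : 1 < u) (j : ℕ) : theta (j + 1) u⁻¹ = theta j u := by
  rw [theta_succ, Int.fract_eq_self.2 ⟨by positivity, inv_lt_one_of_one_lt₀ hu⟩, one_div, inv_inv]

theorem measurable_theta (j : ℕ) : Measurable (theta j) := by
  induction j with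
  | zero => exact measurable_id
  | succ j ih => exact measurable_const.div (measurable_fract.comp ih)

def thetaLtSet (m : ℕ) (α : ℕ → ℕ) : Set ℝ :=
  {t | t ∈ Ioo (0 : ℝ) 1 ∧ Irrational t ∧ ∀ j, 1 ≤ j → j ≤ m → theta j t < α j}

theorem thetaLtSet_subset_Ioo (m : ℕ) (α : ℕ → ℕ) : thetaLtSet m α ⊆ Ioo 0 1 := fun _ ht => ht.1

theorem measurableSet_thetaLtSet (m : ℕ) (α : ℕ → ℕ) : MeasurableSet (thetaLtSet m α) := by
  have hirr : MeasurableSet {t : ℝ | Irrational t} :=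
    (countable_range ((↑) : ℚ → ℝ)).measurableSet.compl
  refine measurableSet_Ioo.inter (hirr.inter ?_)
  change MeasurableSet {t | ∀ j, 1 ≤ j → j ≤ m → theta j t < α j}
  simp only [Set.ofPred_forall]
  exact .iInter fun j => .iInter fun _ => .iInter fun _ =>
    measurableSet_lt (measurable_theta j) measurable_const

theorem thetaLtSet_zero_ae_eq (α : ℕ → ℕ) : thetaLtSet 0 α =ᵐ[volume] Ioo (0 : ℝ) 1 := by
  have hrat : ∀ᵐ t : ℝ, Irrational t :=
    (measure_eq_zero_iff_ae_notMem.1 ((countable_range ((↑) : ℚ → ℝ)).measure_zero _))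
  filter_upwards [hrat] with t ht
  exact propext ⟨fun h => h.1, fun h => ⟨h, ht, fun j h1 h0 => by omega⟩⟩

theorem exists_eq_inv_natCast_add {t : ℝ} (ht : t ∈ Ioo 0 1) (hirr : Irrational t) :
    ∃ a : ℕ, 1 ≤ a ∧ ∃ x ∈ Ioo (0 : ℝ) 1, t = (a + x)⁻¹ := by
  have hu : 1 < t⁻¹ := (one_lt_inv₀ ht.1).2 ht.2
  have hu0 : 0 ≤ t⁻¹ := by linarith
  refine ⟨⌊t⁻¹⌋₊, Nat.le_floor (by exact_mod_cast hu.le), t⁻¹ - ⌊t⁻¹⌋₊, ⟨?_, ?_⟩, by simp⟩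
  · exact lt_of_le_of_ne (sub_nonneg.2 (Nat.floor_le hu0)) (hirr.inv.sub_natCast _).ne_zero.symm
  · linarith [Nat.lt_floor_add_one t⁻¹]

theorem inv_natCast_add_mem_thetaLtSet_succ_iff {m a : ℕ} {α : ℕ → ℕ} (ha : 1 ≤ a) {x : ℝ}
    (hx : x ∈ Ioo 0 1) :
    (a + x)⁻¹ ∈ thetaLtSet (m + 1) α ↔ a < α 1 ∧ x ∈ thetaLtSet m (fun j => α (j + 1)) := by
  have h1 : 1 < (a : ℝ) + x := by
    have : (1 : ℝ) ≤ a := by exact_mod_cast ha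
    linarith [hx.1]
  have hmem : (a + x)⁻¹ ∈ Ioo (0 : ℝ) 1 := ⟨by positivity, inv_lt_one_of_one_lt₀ h1⟩
  have hfirst : (a : ℝ) + x < α 1 ↔ a < α 1 := by
    constructor
    · intro h; exact_mod_cast (le_add_of_nonneg_right hx.1.le).trans_lt h
    · intro h
      have : (a : ℝ) + 1 ≤ α 1 := by exact_mod_cast h
      linarith [hx.2]
  simp only [thetaLtSet, mem_ofPred_eq, hmem, hx, irrational_inv_iff, irrational_natCast_add_iff,
    true_and]
  constructor
  · rintro ⟨hirr, hlt⟩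
    refine ⟨hfirst.1 ?_, hirr, fun j hj1 hjm => ?_⟩
    · have := hlt (0 + 1) le_rfl (by omega)
      rwa [theta_succ_inv h1] at this
    · have := hlt (j + 1) (by omega) (by omega)
      rwa [theta_succ_inv h1, theta_natCast_add hj1] at this
  · rintro ⟨haα, hirr, hlt⟩
    refine ⟨hirr, fun j hj1 hjm => ?_⟩
    obtain ⟨k, rfl⟩ := Nat.exists_eq_add_of_le' hj1
    rw [theta_succ_inv h1]
    rcases Nat.eq_zero_or_pos k with rfl | hk
    · exact hfirst.2 haα
    · rw [theta_natCast_add hk]; exact hlt k hk (by omega)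

theorem thetaLtSet_succ (m : ℕ) (α : ℕ → ℕ) :
    thetaLtSet (m + 1) α =
      ⋃ a ∈ Finset.Ico 1 (α 1),
        (fun x : ℝ => ((a : ℝ) + x)⁻¹) '' thetaLtSet m (fun j => α (j + 1)) := by
  ext t
  simp only [mem_iUnion, mem_image, Finset.mem_Ico, exists_prop]
  constructor
  · intro ht
    obtain ⟨a, ha, x, hx, rfl⟩ := exists_eq_inv_natCast_add ht.1 ht.2.1
    obtain ⟨haα, hxM⟩ := (inv_natCast_add_mem_thetaLtSet_succ_iff ha hx).1 ht
    exact ⟨a, ⟨ha, haα⟩, x, hxM, rfl⟩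
  · rintro ⟨a, ⟨ha, haα⟩, x, hxM, rfl⟩
    exact (inv_natCast_add_mem_thetaLtSet_succ_iff ha hxM.1).2 ⟨haα, hxM⟩

theorem integrableOn_inv_one_add_mul_sq {y : ℝ} (hy : 0 ≤ y) :
    IntegrableOn (fun x : ℝ => ((1 + y * x) ^ 2)⁻¹) (Icc 0 1) :=
  ContinuousOn.integrableOn_Icc <| ContinuousOn.inv₀ (by fun_prop) fun x hx =>
    pow_ne_zero 2 (add_pos_of_pos_of_nonneg one_pos (mul_nonneg hy hx.1)).ne'

theorem integral_Ioo_inv_one_add_mul_sq {y : ℝ} (hy : 0 ≤ y) :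
    ∫ x in Ioo (0 : ℝ) 1, ((1 + y * x) ^ 2)⁻¹ = (1 + y)⁻¹ := by
  have hpos : ∀ x ∈ uIcc (0 : ℝ) 1, 0 < 1 + y * x := fun x hx => by
    rw [uIcc_of_le zero_le_one] at hx
    nlinarith [mul_nonneg hy hx.1]
  have hderiv : ∀ x ∈ uIcc (0 : ℝ) 1,
      HasDerivAt (fun x => x / (1 + y * x)) (((1 + y * x) ^ 2)⁻¹) x := fun x hx => by
    have hne := (hpos x hx).ne'
    refine ((hasDerivAt_id' x).div (((hasDerivAt_id' x).const_mul y).const_add 1) hne)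
      |>.congr_deriv ?_
    field_simp
    ring
  rw [← integral_Ioc_eq_integral_Ioo, ← intervalIntegral.integral_of_le zero_le_one,
    intervalIntegral.integral_eq_sub_of_hasDerivAt hderiv
      ((intervalIntegrable_iff_integrableOn_Icc_of_le zero_le_one).2
        (integrableOn_inv_one_add_mul_sq hy))]
  simp

theorem setIntegral_image_inv_add {s : Set ℝ} (hs : MeasurableSet s) (hs0 : s ⊆ Ici 0) {a y : ℝ}
    (ha : 0 < a) (hy : 0 ≤ y) :
    ∫ t in (fun x => (a + x)⁻¹) '' s, ((1 + y * t) ^ 2)⁻¹ =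
      ((a + y) ^ 2)⁻¹ * ∫ x in s, ((1 + (a + y)⁻¹ * x) ^ 2)⁻¹ := by
  have hpos : ∀ x ∈ s, 0 < a + x := fun x hx => by linarith [mem_Ici.1 (hs0 hx)]
  have hderiv : ∀ x ∈ s, HasDerivWithinAt (fun x => (a + x)⁻¹) (-1 / (a + x) ^ 2) s x :=
    fun x hx => (((hasDerivAt_id' x).const_add a).inv (hpos x hx).ne').hasDerivWithinAt
  have hinj : InjOn (fun x => (a + x)⁻¹) s := fun x _ x' _ h => by simpa using h
  rw [integral_image_eq_integral_abs_deriv_smul hs hderiv hinj, ← integral_const_mul]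
  refine setIntegral_congr_fun hs fun x hx => ?_
  have hax := hpos x hx
  have hay : 0 < a + y := by linarith
  have e1 : 1 + y * (a + x)⁻¹ = (a + x + y) / (a + x) := by field_simp
  have e2 : 1 + (a + y)⁻¹ * x = (a + x + y) / (a + y) := by field_simp; ring
  simp only [smul_eq_mul, abs_div, abs_neg, abs_one, abs_pow, abs_of_pos hax, e1, e2]
  field_simp

theorem sum_Ico_inv_sq_mul_inv_one_add_inv {y : ℝ} (hy : 0 ≤ y) {A : ℕ} (hA : 1 ≤ A) :
    ∑ a ∈ Finset.Ico 1 A, ((a + y) ^ 2)⁻¹ * (1 + (a + y)⁻¹)⁻¹ = (1 + y)⁻¹ - (A + y)⁻¹ := by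
  have hterm : ∀ a ∈ Finset.Ico 1 A, ((a + y) ^ 2)⁻¹ * (1 + (a + y)⁻¹)⁻¹ =
      -(((a + 1 : ℕ) : ℝ) + y)⁻¹ - -((a : ℝ) + y)⁻¹ := fun a ha => by
    have : 0 < (a : ℝ) + y := add_pos_of_pos_of_nonneg (Nat.cast_pos.2 (Finset.mem_Ico.1 ha).1) hy
    push_cast
    field_simp
    ring
  rw [Finset.sum_congr rfl hterm, Finset.sum_Ico_sub (fun a : ℕ => -((a : ℝ) + y)⁻¹) hA]
  push_cast
  ring

theorem inv_one_add_sub_inv_add_le {A y : ℝ} (hA : 1 ≤ A) (hy : 0 ≤ y) :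
    (1 + y)⁻¹ - (A + y)⁻¹ ≤ (1 - 1 / A) * (1 + y)⁻¹ := by
  have hA0 : 0 < A := by linarith
  field_simp
  nlinarith [mul_nonneg hy (sub_nonneg.2 hA)]

theorem one_sub_one_div_sq_mul_le {A y : ℝ} (hA : 1 ≤ A) (hy : 0 ≤ y) (hy1 : y ≤ 1) :
    (1 - 1 / A) ^ 2 * (1 + y)⁻¹ ≤ (1 + y)⁻¹ - (A + y)⁻¹ := by
  have hA0 : 0 < A := by linarith
  field_simp
  nlinarith [mul_nonneg (sub_nonneg.2 hA) (mul_nonneg (sub_nonneg.2 hy1) hA0.le),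
    mul_nonneg (sub_nonneg.2 hA) hy]

theorem prod_Icc_one_succ {M : Type*} [CommMonoid M] (f : ℕ → M) (m : ℕ) :
    ∏ j ∈ Finset.Icc 1 (m + 1), f j = f 1 * ∏ j ∈ Finset.Icc 1 m, f (j + 1) := by
  induction m with
  | zero => simp
  | succ k ih =>
    rw [Finset.prod_Icc_succ_top (by omega), ih, Finset.prod_Icc_succ_top (by omega), mul_assoc]

theorem setIntegral_thetaLtSet_succ (m : ℕ) (α : ℕ → ℕ) {y : ℝ} (hy : 0 ≤ y) :
    ∫ t in thetaLtSet (m + 1) α, ((1 + y * t) ^ 2)⁻¹ =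
      ∑ a ∈ Finset.Ico 1 (α 1), ((a + y) ^ 2)⁻¹ *
        ∫ x in thetaLtSet m (fun j => α (j + 1)), ((1 + (a + y)⁻¹ * x) ^ 2)⁻¹ := by
  have hM := measurableSet_thetaLtSet m (fun j => α (j + 1))
  have hM0 : thetaLtSet m (fun j => α (j + 1)) ⊆ Ici 0 := fun x hx =>
    (thetaLtSet_subset_Ioo _ _ hx).1.le
  have hint : IntegrableOn (fun t => ((1 + y * t) ^ 2)⁻¹) (thetaLtSet (m + 1) α) :=
    (integrableOn_inv_one_add_mul_sq hy).mono_set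
      ((thetaLtSet_subset_Ioo _ _).trans Ioo_subset_Icc_self)
  rw [thetaLtSet_succ] at hint ⊢
  rw [integral_biUnion_finset]
  · refine Finset.sum_congr rfl fun a ha => ?_
    exact setIntegral_image_inv_add hM hM0 (Nat.cast_pos.2 (Finset.mem_Ico.1 ha).1) hy
  · intro a _
    refine hM.image_of_continuousOn_injOn ?_ fun x _ x' _ h => by simpa using h
    exact ContinuousOn.inv₀ (by fun_prop) fun x hx =>
      (add_pos_of_nonneg_of_pos (Nat.cast_nonneg a) (thetaLtSet_subset_Ioo _ _ hx).1).ne'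
  · intro a _ b _ hab
    refine disjoint_image_image fun x hx x' hx' h => hab ?_
    have hx := thetaLtSet_subset_Ioo _ _ hx
    have hx' := thetaLtSet_subset_Ioo _ _ hx'
    rw [inv_inj] at h
    have hab : a < b + 1 := by exact_mod_cast (by linarith [hx.1, hx'.2] : (a : ℝ) < b + 1)
    have hba : b < a + 1 := by exact_mod_cast (by linarith [hx.2, hx'.1] : (b : ℝ) < a + 1)
    omega
  · exact fun a ha => hint.mono_set fun t ht => mem_iUnion₂.2 ⟨a, ha, ht⟩

theorem setIntegral_thetaLtSet_le {m : ℕ} {α : ℕ → ℕ} (hα : ∀ j, 1 ≤ j → j ≤ m → 0 < α j)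
    {y : ℝ} (hy : 0 ≤ y) :
    ∫ t in thetaLtSet m α, ((1 + y * t) ^ 2)⁻¹ ≤
        (∏ j ∈ Finset.Icc 1 m, (1 - 1 / (α j : ℝ))) * (1 + y)⁻¹ := by
  induction m generalizing α y with
  | zero =>
    rw [setIntegral_congr_set (thetaLtSet_zero_ae_eq α), integral_Ioo_inv_one_add_mul_sq hy]
    simp
  | succ m ih =>
    set P := ∏ j ∈ Finset.Icc 1 m, (1 - 1 / (α (j + 1) : ℝ))
    have hP : 0 ≤ P := Finset.prod_nonneg fun j _ => by
      rw [one_div, sub_nonneg]; exact Nat.cast_inv_le_one _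
    have hα1 : 1 ≤ α 1 := hα 1 le_rfl (by omega)
    rw [setIntegral_thetaLtSet_succ m α hy, prod_Icc_one_succ]
    calc ∑ a ∈ Finset.Ico 1 (α 1), ((a + y) ^ 2)⁻¹ *
          ∫ x in thetaLtSet m (fun j => α (j + 1)), ((1 + (a + y)⁻¹ * x) ^ 2)⁻¹
        ≤ ∑ a ∈ Finset.Ico 1 (α 1), ((a + y) ^ 2)⁻¹ * (P * (1 + (a + y)⁻¹)⁻¹) :=
          Finset.sum_le_sum fun a _ => mul_le_mul_of_nonneg_left
            (ih (fun j h1 h2 => hα (j + 1) (by omega) (by omega)) (by positivity)) (by positivity)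
      _ = P * ((1 + y)⁻¹ - (α 1 + y)⁻¹) := by
          simp_rw [mul_left_comm _ P, ← Finset.mul_sum, sum_Ico_inv_sq_mul_inv_one_add_inv hy hα1]
      _ ≤ P * ((1 - 1 / (α 1 : ℝ)) * (1 + y)⁻¹) :=
          mul_le_mul_of_nonneg_left (inv_one_add_sub_inv_add_le (by exact_mod_cast hα1) hy) hP
      _ = (1 - 1 / (α 1 : ℝ)) * P * (1 + y)⁻¹ := by ring

theorem le_setIntegral_thetaLtSet {m : ℕ} {α : ℕ → ℕ} (hα : ∀ j, 1 ≤ j → j ≤ m → 0 < α j)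
    {y : ℝ} (hy : 0 ≤ y) (hy1 : y ≤ 1) :
    (∏ j ∈ Finset.Icc 1 m, (1 - 1 / (α j : ℝ))) ^ 2 * (1 + y)⁻¹ ≤
      ∫ t in thetaLtSet m α, ((1 + y * t) ^ 2)⁻¹ := by
  induction m generalizing α y with
  | zero =>
    rw [setIntegral_congr_set (thetaLtSet_zero_ae_eq α), integral_Ioo_inv_one_add_mul_sq hy]
    simp
  | succ m ih =>
    set P := ∏ j ∈ Finset.Icc 1 m, (1 - 1 / (α (j + 1) : ℝ))
    have hα1 : 1 ≤ α 1 := hα 1 le_rfl (by omega)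
    rw [setIntegral_thetaLtSet_succ m α hy, prod_Icc_one_succ]
    calc ((1 - 1 / (α 1 : ℝ)) * P) ^ 2 * (1 + y)⁻¹
        = P ^ 2 * ((1 - 1 / (α 1 : ℝ)) ^ 2 * (1 + y)⁻¹) := by ring
      _ ≤ P ^ 2 * ((1 + y)⁻¹ - (α 1 + y)⁻¹) := mul_le_mul_of_nonneg_left
          (one_sub_one_div_sq_mul_le (by exact_mod_cast hα1) hy hy1) (sq_nonneg P)
      _ = ∑ a ∈ Finset.Ico 1 (α 1), ((a + y) ^ 2)⁻¹ * (P ^ 2 * (1 + (a + y)⁻¹)⁻¹) := by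
          simp_rw [mul_left_comm _ (P ^ 2), ← Finset.mul_sum,
            sum_Ico_inv_sq_mul_inv_one_add_inv hy hα1]
      _ ≤ ∑ a ∈ Finset.Ico 1 (α 1), ((a + y) ^ 2)⁻¹ *
          ∫ x in thetaLtSet m (fun j => α (j + 1)), ((1 + (a + y)⁻¹ * x) ^ 2)⁻¹ := by
          refine Finset.sum_le_sum fun a ha => mul_le_mul_of_nonneg_left ?_ (by positivity)
          refine ih (fun j h1 h2 => hα (j + 1) (by omega) (by omega)) (by positivity) ?_
          have : (1 : ℝ) ≤ a := by exact_mod_cast (Finset.mem_Ico.1 ha).1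
          exact inv_le_one_of_one_le₀ (by linarith)

theorem stmt_12 (m : ℕ) (α : ℕ → ℕ) (hα : ∀ j, 1 ≤ j → j ≤ m → 0 < α j) :
    let M : Set ℝ := {t | t ∈ Set.Ioo (0:ℝ) 1 ∧ Irrational t ∧
      ∀ j, 1 ≤ j → j ≤ m → theta j t < α j}
    ENNReal.ofReal (∏ j ∈ Finset.Icc 1 m, (1 - 1/(α j : ℝ))^2) ≤ volume M ∧
    volume M ≤ ENNReal.ofReal (∏ j ∈ Finset.Icc 1 m, (1 - 1/(α j : ℝ))) := by
  change _ ≤ volume (thetaLtSet m α) ∧ volume (thetaLtSet m α) ≤ _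
  have hfin : volume (thetaLtSet m α) ≠ ⊤ :=
    measure_ne_top_of_subset (thetaLtSet_subset_Ioo m α) (by simp)
  have hlow := le_setIntegral_thetaLtSet hα le_rfl zero_le_one
  have hup := setIntegral_thetaLtSet_le hα le_rfl
  simp only [zero_mul, add_zero, one_pow, inv_one, mul_one, setIntegral_const, smul_eq_mul]
    at hlow hup
  rw [← ofReal_measureReal hfin, Finset.prod_pow]
  exact ⟨ENNReal.ofReal_le_ofReal hlow, ENNReal.ofReal_le_ofReal hup⟩
end

section
/- For an irrational t ∈ (0,1) define the sequence t₀ = t, t_j = 1/t_{j-1} - ⌊1/t_{j-1}⌋, and given n ∈ ℕ define n₀ = n, n_j = ⌊t_{j-1}·n_{j-1}⌋. Then for every index j with 1 ≤ j and n_{j+1} > 0 (i.e., before the sequence terminates), n_{j+1} < n_{j-1}/2. -/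
/-! Each `tⱼ₊₁ = fract (1 / tⱼ)` lies in `[0, 1)`, and `tⱼ tⱼ₊₁ < 1/2`: for `tⱼ ≤ 1/2` because
`tⱼ₊₁ < 1`, and for `tⱼ > 1/2` because then `⌊1 / tⱼ⌋ = 1`, so `tⱼ tⱼ₊₁ = 1 - tⱼ`. Since
`nⱼ₊₁ ≤ tⱼ nⱼ`, this gives `nⱼ₊₁ ≤ tⱼ tⱼ₋₁ nⱼ₋₁ < nⱼ₋₁ / 2` as soon as `nⱼ₋₁ > 0`. -/

theorem Int.fract_inv_le_inv_sub_one {x : ℝ} (hx : 0 < x) (hx1 : x ≤ 1) :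
    Int.fract x⁻¹ ≤ x⁻¹ - 1 := by
  have h1 : (1 : ℤ) ≤ ⌊x⁻¹⌋ := Int.le_floor.mpr (by simpa using one_le_inv₀ hx |>.mpr hx1)
  rw [Int.fract]
  have : (1 : ℝ) ≤ ⌊x⁻¹⌋ := by exact_mod_cast h1
  linarith

theorem mul_fract_inv_lt_half {x : ℝ} (h0 : 0 ≤ x) (h1 : x < 1) :
    x * Int.fract x⁻¹ < 1 / 2 := by
  rcases h0.eq_or_lt with rfl | hpos
  · norm_num
  rcases le_or_gt x (1 / 2) with hle | hgt
  · exact (mul_lt_of_lt_one_right hpos (Int.fract_lt_one _)).trans_le hle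
  · calc x * Int.fract x⁻¹ ≤ x * (x⁻¹ - 1) :=
          mul_le_mul_of_nonneg_left (Int.fract_inv_le_inv_sub_one hpos h1.le) h0
      _ = 1 - x := by field_simp
      _ < 1 / 2 := by linarith

theorem stmt_13_general (t : ℝ) (ht : t ∈ Set.Ioo (0:ℝ) 1)
    (ts : ℕ → ℝ) (hts0 : ts 0 = t)
    (htsrec : ∀ j : ℕ, ts (j+1) = 1 / ts j - ⌊1 / ts j⌋)
    (ns : ℕ → ℕ)
    (hnsrec : ∀ j : ℕ, ns (j+1) = ⌊ts j * ns j⌋₊) :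
    ∀ j : ℕ, 1 ≤ j → 0 < ns (j+1) → (ns (j+1) : ℝ) < (ns (j-1) : ℝ) / 2 := by
  have hfract (j : ℕ) : ts (j+1) = Int.fract (ts j)⁻¹ := by rw [htsrec, one_div, Int.fract]
  have hts (j : ℕ) : 0 ≤ ts j ∧ ts j < 1 := by
    cases j with
    | zero => exact hts0 ▸ ⟨ht.1.le, ht.2⟩
    | succ j => exact hfract j ▸ ⟨Int.fract_nonneg _, Int.fract_lt_one _⟩
  have hstep (j : ℕ) : (ns (j+1) : ℝ) ≤ ts j * ns j :=
    hnsrec j ▸ Nat.floor_le (mul_nonneg (hts j).1 (Nat.cast_nonneg _))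
  intro j hj hpos
  obtain ⟨k, rfl⟩ := Nat.exists_eq_add_of_le' hj
  have hnk : 0 < (ns k : ℝ) := by
    refine Nat.cast_pos.mpr (Nat.pos_of_ne_zero fun h0 => ?_)
    simp [hnsrec, h0] at hpos
  calc (ns (k+1+1) : ℝ) ≤ ts (k+1) * ns (k+1) := hstep _
    _ ≤ ts (k+1) * (ts k * ns k) := mul_le_mul_of_nonneg_left (hstep k) (hts _).1
    _ = ts k * ts (k+1) * ns k := by ring
    _ < 1 / 2 * ns k := by
      rw [hfract]
      exact mul_lt_mul_of_pos_right (mul_fract_inv_lt_half (hts k).1 (hts k).2) hnk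
    _ = ns k / 2 := by ring

theorem stmt_13 (t : ℝ) (ht : t ∈ Set.Ioo (0:ℝ) 1) (hirr : Irrational t)
    (n : ℕ)
    (ts : ℕ → ℝ) (hts0 : ts 0 = t)
    (htsrec : ∀ j : ℕ, ts (j+1) = 1 / ts j - ⌊1 / ts j⌋)
    (ns : ℕ → ℕ) (hns0 : ns 0 = n)
    (hnsrec : ∀ j : ℕ, ns (j+1) = ⌊ts j * ns j⌋₊) :
    ∀ j : ℕ, 1 ≤ j → 0 < ns (j+1) → (ns (j+1) : ℝ) < (ns (j-1) : ℝ) / 2 :=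
  stmt_13_general t ht ts hts0 htsrec ns hnsrec
end

section
/- For an irrational t ∈ (0,1) and integer n ≥ 8, let j' be the first index with n_{j'} = 0 in the sequence n₀ = n, n_j = ⌊t_{j-1}·n_{j-1}⌋, where t₀ = t and t_j = 1/t_{j-1} - ⌊1/t_{j-1}⌋. Then j' ≤ 4·log n. -/
/-!
The product of two consecutive Gauss-map iterates is at most `1/2`: if `a = ⌊1/x⌋ ≥ 1`, then
`x · T(x) = 1 - a x` while `(a + 1) x > 1`. Since `n_{j+2} ≤ t_{j+1} t_j n_j`, the sequence
`(n_j)` at least halves every two steps, so `n_{2k} ≥ 1` for `k = ⌊(j' - 1)/2⌋` forces `2^k ≤ n`, i.e. `k ≤ log n / log 2`,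
and `j' ≤ 2k + 2 ≤ 4 log n` once `n ≥ 8`.
-/

open Real Set

lemma mul_fract_one_div_le_half {x : ℝ} (hx0 : 0 ≤ x) (hx1 : x < 1) :
    x * Int.fract (1 / x) ≤ 1 / 2 := by
  rcases hx0.eq_or_lt with rfl | hpos
  · norm_num
  set a : ℤ := ⌊1 / x⌋
  have ha : (1 : ℝ) ≤ a := by
    exact_mod_cast Int.le_floor.mpr (by rw [Int.cast_one, le_div_iff₀ hpos]; linarith)
  have hax : 1 < ((a : ℝ) + 1) * x := by
    have := Int.lt_floor_add_one (1 / x)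
    rwa [div_lt_iff₀ hpos] at this
  have hfract : x * Int.fract (1 / x) = 1 - a * x := by
    rw [Int.fract]
    field_simp
    rfl
  rw [hfract]
  nlinarith

lemma fract_iterate_mem_Ico {ts : ℕ → ℝ} (h0 : ts 0 ∈ Ico 0 1)
    (hrec : ∀ j, ts (j + 1) = Int.fract (1 / ts j)) (j : ℕ) : ts j ∈ Ico 0 1 := by
  cases j with
  | zero => exact h0
  | succ j => exact hrec j ▸ ⟨Int.fract_nonneg _, Int.fract_lt_one _⟩

lemma two_mul_floor_mul_floor_mul_le {a b : ℝ} (ha : 0 ≤ a) (hb : 0 ≤ b) (hab : a * b ≤ 1 / 2)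
    (m : ℕ) : 2 * ⌊b * ⌊a * m⌋₊⌋₊ ≤ m := by
  have hfloor_a : (⌊a * m⌋₊ : ℝ) ≤ a * m := Nat.floor_le (by positivity)
  have hfloor_b : (⌊b * ⌊a * m⌋₊⌋₊ : ℝ) ≤ b * ⌊a * m⌋₊ := Nat.floor_le (by positivity)
  have : (2 * ⌊b * ⌊a * m⌋₊⌋₊ : ℝ) ≤ m :=
    calc (2 * ⌊b * ⌊a * m⌋₊⌋₊ : ℝ) ≤ 2 * (b * (a * m)) := by gcongr; exact hfloor_b.trans (by gcongr)
      _ = 2 * (a * b) * m := by ring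
      _ ≤ m := by nlinarith [(Nat.cast_nonneg m : (0 : ℝ) ≤ m)]
  exact_mod_cast this

lemma mul_two_pow_le_of_two_mul_le {ns : ℕ → ℕ} (h : ∀ j, 2 * ns (j + 2) ≤ ns j) (k : ℕ) :
    ns (2 * k) * 2 ^ k ≤ ns 0 := by
  induction k with
  | zero => simp
  | succ k ih =>
    calc ns (2 * (k + 1)) * 2 ^ (k + 1) = 2 * ns (2 * k + 2) * 2 ^ k := by ring_nf
      _ ≤ ns (2 * k) * 2 ^ k := Nat.mul_le_mul_right _ (h (2 * k))
      _ ≤ ns 0 := ih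

lemma two_mul_add_two_le_four_mul_log {n k : ℕ} (hn : 8 ≤ n) (hk : 2 ^ k ≤ n) :
    2 * (k : ℝ) + 2 ≤ 4 * log n := by
  have hklog : k * log 2 ≤ log n := by
    rw [← Real.log_pow]
    exact Real.log_le_log (by positivity) (by exact_mod_cast hk)
  have hlog8 : 3 * log 2 ≤ log n := by
    rw [← Real.log_rpow two_pos]
    exact Real.log_le_log (by positivity) (by norm_num; exact_mod_cast hn)
  have hlog2 := Real.log_two_gt_d9
  nlinarith [(Nat.cast_nonneg k : (0 : ℝ) ≤ k)]

theorem stmt_14_general (t : ℝ) (ht : t ∈ Set.Ioo (0:ℝ) 1)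
    (n : ℕ) (hn : 8 ≤ n)
    (ts : ℕ → ℝ) (hts0 : ts 0 = t)
    (htsrec : ∀ j : ℕ, ts (j+1) = 1 / ts j - ⌊1 / ts j⌋)
    (ns : ℕ → ℕ) (hns0 : ns 0 = n)
    (hnsrec : ∀ j : ℕ, ns (j+1) = ⌊ts j * ns j⌋₊)
    (j' : ℕ) (hj'least : ∀ i, i < j' → ns i ≠ 0) :
    (j' : ℝ) ≤ 4 * Real.log n := by
  have hts : ∀ j, ts j ∈ Ico 0 1 :=
    fract_iterate_mem_Ico (hts0 ▸ Ioo_subset_Ico_self ht) htsrec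
  have hhalve : ∀ j, 2 * ns (j + 2) ≤ ns j := fun j => by
    rw [hnsrec (j + 1), hnsrec j]
    refine two_mul_floor_mul_floor_mul_le (hts j).1 (hts (j + 1)).1 ?_ _
    rw [htsrec j]
    exact mul_fract_one_div_le_half (hts j).1 (hts j).2
  rcases Nat.eq_zero_or_pos j' with rfl | hj'
  · simpa using Real.log_nonneg (by exact_mod_cast (by omega : 1 ≤ n))
  set k := (j' - 1) / 2
  have hpow : 2 ^ k ≤ n :=
    calc 2 ^ k ≤ ns (2 * k) * 2 ^ k :=
          Nat.le_mul_of_pos_left _ (Nat.pos_of_ne_zero (hj'least _ (by omega)))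
      _ ≤ n := hns0 ▸ mul_two_pow_le_of_two_mul_le hhalve k
  have hj'k : (j' : ℝ) ≤ 2 * k + 2 := by exact_mod_cast (by omega : j' ≤ 2 * k + 2)
  exact hj'k.trans (two_mul_add_two_le_four_mul_log hn hpow)

theorem stmt_14 (t : ℝ) (ht : t ∈ Set.Ioo (0:ℝ) 1) (hirr : Irrational t)
    (n : ℕ) (hn : 8 ≤ n)
    (ts : ℕ → ℝ) (hts0 : ts 0 = t)
    (htsrec : ∀ j : ℕ, ts (j+1) = 1 / ts j - ⌊1 / ts j⌋)
    (ns : ℕ → ℕ) (hns0 : ns 0 = n)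
    (hnsrec : ∀ j : ℕ, ns (j+1) = ⌊ts j * ns j⌋₊)
    (j' : ℕ) (hj'zero : ns j' = 0) (hj'least : ∀ i, i < j' → ns i ≠ 0) :
    (j' : ℝ) ≤ 4 * Real.log n :=
  stmt_14_general t ht n hn ts hts0 htsrec ns hns0 hnsrec j' hj'least
end

section
/- Let Θ : [1,∞) → [1,∞) be monotonically increasing with Θ(n) → ∞. For n ∈ ℕ set m = ⌊4·log n⌋ and M_n = { t ∈ (0,1) \ ℚ : ϑ_j(t) < 1 + ⌊Θ(n)·log n⌋ for all j = 1,…,m }, where ϑ_j(t) are the complete quotients of t. Then the Lebesgue measure |M_n| → 1 as n → ∞. -/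
/-!
The Gauss map `G x = fract (1 / x)` shifts complete quotients: `ϑ_{j+1}(t) = 1 / G^j(t)` for
`t ∈ (0, 1)`. The Gauss measure `dx / (1 + x)` on `(0, 1)` does not increase under pull-back by `G`:
the preimage of a set is covered by its images under the inverse branches `x ↦ 1 / (k + 1 + x)`,
and the Jacobians of the branches turn the density into the telescoping sum
`∑ₖ (1 / (k + 1 + x) - 1 / (k + 2 + x)) = 1 / (1 + x)`. Since this measure lies between half of
Lebesgue measure and Lebesgue measure on `(0, 1)`, we get `|{t : ϑ_{j+1}(t) ≥ a}| ≤ 2 / a` for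
every `j`. A union bound over `j ≤ ⌊4 log n⌋` with `a = 1 + ⌊Θ(n) log n⌋ > Θ(n) log n` gives
`|M_n| ≥ 1 - 8 / Θ(n)`.
-/

open MeasureTheory Filter

open Set Topology
open scoped ENNReal

noncomputable section

def gaussMap (x : ℝ) : ℝ := Int.fract x⁻¹

/-- The Gauss density `1 / (1 + x)`, without the normalizing factor `1 / log 2`. -/
def gaussDensity (x : ℝ) : ℝ≥0∞ := ENNReal.ofReal (1 + x)⁻¹

def gaussMeasure : Measure ℝ := (volume.restrict (Ioo 0 1)).withDensity gaussDensity

/-- The inverse branch of `gaussMap` on `(1 / (k + 2), 1 / (k + 1))`. -/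
def gaussBranch (k : ℕ) (x : ℝ) : ℝ := (k + 1 + x)⁻¹

lemma measurable_gaussMap : Measurable gaussMap := measurable_fract.comp measurable_inv

lemma fract_theta (j : ℕ) (t : ℝ) : Int.fract (theta j t) = gaussMap^[j] (Int.fract t) := by
  induction j with
  | zero => rfl
  | succ j ih => rw [Function.iterate_succ_apply', ← ih, theta, one_div, gaussMap]

lemma theta_succ_eq_inv (j : ℕ) {t : ℝ} (ht : t ∈ Ico 0 1) :
    theta (j + 1) t = (gaussMap^[j] t)⁻¹ := by
  rw [theta, fract_theta, Int.fract_eq_self.2 ht, one_div]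

lemma countable_gaussMap_preimage_zero : (gaussMap ⁻¹' {0}).Countable := by
  have : gaussMap ⁻¹' {0} = Inv.inv ⁻¹' range ((↑) : ℤ → ℝ) := by
    ext t
    simp only [gaussMap, mem_preimage, mem_singleton_iff, Int.fract_eq_zero_iff]
  rw [this]
  exact (countable_range _).preimage inv_injective

lemma gaussBranch_gaussMap {t : ℝ} (ht : t ∈ Ioo 0 1) :
    gaussBranch (⌊t⁻¹⌋₊ - 1) (gaussMap t) = t := by
  have hfloor : 1 ≤ ⌊t⁻¹⌋₊ := Nat.one_le_floor_iff _ |>.2 (one_le_inv₀ ht.1 |>.2 ht.2.le)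
  rw [gaussBranch, gaussMap, Nat.cast_sub hfloor, Nat.cast_one, sub_add_cancel,
    natCast_floor_eq_intCast_floor (inv_nonneg.2 ht.1.le), Int.floor_add_fract, inv_inv]

lemma measurable_gaussBranch (k : ℕ) : Measurable (gaussBranch k) := by
  unfold gaussBranch
  fun_prop

lemma injective_gaussBranch (k : ℕ) : Function.Injective (gaussBranch k) := fun x y h => by
  simpa [gaussBranch] using h

lemma gaussBranch_mem_Ioo (k : ℕ) {x : ℝ} (hx : x ∈ Ioo 0 1) : gaussBranch k x ∈ Ioo 0 1 := by
  have : 1 < (k : ℝ) + 1 + x := by linarith [hx.1, k.cast_nonneg (α := ℝ)]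
  exact ⟨inv_pos.2 (by linarith), inv_lt_one_of_one_lt₀ this⟩

lemma hasDerivAt_gaussBranch (k : ℕ) {x : ℝ} (hx : 0 ≤ x) :
    HasDerivAt (gaussBranch k) (-1 / (k + 1 + x) ^ 2) x := by
  have hpos : (k : ℝ) + 1 + x ≠ 0 := by positivity
  exact ((hasDerivAt_id' x).const_add ((k : ℝ) + 1)).inv hpos

lemma gaussMeasure_apply {s : Set ℝ} (hs : MeasurableSet s) :
    gaussMeasure s = ∫⁻ x in s ∩ Ioo 0 1, gaussDensity x := by
  rw [gaussMeasure, withDensity_apply _ hs, Measure.restrict_restrict hs]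

lemma gaussMeasure_image_gaussBranch (k : ℕ) {B : Set ℝ} (hB : MeasurableSet B)
    (hBI : B ⊆ Ioo 0 1) :
    gaussMeasure (gaussBranch k '' B) =
      ∫⁻ x in B, ENNReal.ofReal (gaussBranch k x - gaussBranch (k + 1) x) := by
  have himage : MeasurableSet (gaussBranch k '' B) :=
    ((measurable_gaussBranch k).measurableEmbedding
      (injective_gaussBranch k)).measurableSet_image.2 hB
  have hsub : gaussBranch k '' B ⊆ Ioo 0 1 := by
    rintro _ ⟨x, hx, rfl⟩
    exact gaussBranch_mem_Ioo k (hBI hx)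
  rw [gaussMeasure_apply himage, inter_eq_left.2 hsub,
    lintegral_image_eq_lintegral_abs_deriv_mul hB
      (fun x hx => (hasDerivAt_gaussBranch k (hBI hx).1.le).hasDerivWithinAt)
      (injective_gaussBranch k).injOn]
  refine setLIntegral_congr_fun hB fun x hx => ?_
  have hpos : 0 < (k : ℝ) + 1 + x := by linarith [(hBI hx).1, k.cast_nonneg (α := ℝ)]
  have hpos' : (k : ℝ) + 1 + 1 + x ≠ 0 := by linarith
  rw [gaussDensity, ← ENNReal.ofReal_mul (abs_nonneg _), abs_div, abs_neg, abs_one,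
    abs_of_pos (by positivity)]
  congr 1
  simp only [gaussBranch]
  push_cast
  field_simp
  ring

lemma hasSum_sub_succ_of_antitone {f : ℕ → ℝ} {l : ℝ} (hf : Antitone f)
    (hl : Tendsto f atTop (𝓝 l)) : HasSum (fun n => f n - f (n + 1)) (f 0 - l) := by
  refine (hasSum_iff_tendsto_nat_of_nonneg (fun n => sub_nonneg.2 (hf n.le_succ)) _).2 ?_
  simp only [Finset.sum_range_sub']
  exact tendsto_const_nhds.sub hl

lemma tsum_gaussBranch_sub_succ {x : ℝ} (hx : 0 ≤ x) :
    ∑' k : ℕ, ENNReal.ofReal (gaussBranch k x - gaussBranch (k + 1) x) = gaussDensity x := by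
  have hanti : Antitone (gaussBranch · x) := antitone_nat_of_succ_le fun k =>
    inv_anti₀ (by positivity) (by push_cast; linarith)
  have hlim : Tendsto (gaussBranch · x) atTop (𝓝 0) :=
    tendsto_inv_atTop_zero.comp <| tendsto_atTop_add_const_right _ x <|
      tendsto_atTop_add_const_right _ 1 tendsto_natCast_atTop_atTop
  have h := hasSum_sub_succ_of_antitone hanti hlim
  rw [← ENNReal.ofReal_tsum_of_nonneg (fun k => sub_nonneg.2 (hanti k.le_succ)) h.summable,
    h.tsum_eq, gaussDensity, gaussBranch]
  simp

lemma gaussMeasure_preimage_gaussMap_le {A : Set ℝ} (hA : MeasurableSet A) :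
    gaussMeasure (gaussMap ⁻¹' A) ≤ gaussMeasure A := by
  have hAI : MeasurableSet (A ∩ Ioo 0 1) := hA.inter measurableSet_Ioo
  have hae : ∀ᵐ t ∂gaussMeasure, t ∈ Ioo 0 1 ∧ t ∉ gaussMap ⁻¹' {0} :=
    (withDensity_absolutelyContinuous _ _).ae_le <| (ae_restrict_mem measurableSet_Ioo).and
      (ae_restrict_of_ae (countable_gaussMap_preimage_zero.ae_notMem volume))
  have hcover : gaussMap ⁻¹' A ≤ᵐ[gaussMeasure] ⋃ k : ℕ, gaussBranch k '' (A ∩ Ioo 0 1) := by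
    filter_upwards [hae] with t ⟨ht, h0⟩ htA
    exact mem_iUnion.2 ⟨_, gaussMap t,
      ⟨htA, (Int.fract_nonneg _).lt_of_ne' h0, Int.fract_lt_one _⟩, gaussBranch_gaussMap ht⟩
  calc gaussMeasure (gaussMap ⁻¹' A)
      ≤ gaussMeasure (⋃ k : ℕ, gaussBranch k '' (A ∩ Ioo 0 1)) := measure_mono_ae hcover
    _ ≤ ∑' k : ℕ, gaussMeasure (gaussBranch k '' (A ∩ Ioo 0 1)) := measure_iUnion_le _
    _ = ∑' k : ℕ, ∫⁻ x in A ∩ Ioo 0 1,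
          ENNReal.ofReal (gaussBranch k x - gaussBranch (k + 1) x) :=
        tsum_congr fun k => gaussMeasure_image_gaussBranch k hAI inter_subset_right
    _ = ∫⁻ x in A ∩ Ioo 0 1, ∑' k : ℕ,
          ENNReal.ofReal (gaussBranch k x - gaussBranch (k + 1) x) :=
        (lintegral_tsum fun k => ((measurable_gaussBranch k).sub
          (measurable_gaussBranch (k + 1))).ennreal_ofReal.aemeasurable).symm
    _ = ∫⁻ x in A ∩ Ioo 0 1, gaussDensity x :=
        setLIntegral_congr_fun hAI fun x hx => tsum_gaussBranch_sub_succ hx.2.1.le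
    _ = gaussMeasure A := (gaussMeasure_apply hA).symm

lemma gaussMeasure_preimage_iterate_le (j : ℕ) {A : Set ℝ} (hA : MeasurableSet A) :
    gaussMeasure (gaussMap^[j] ⁻¹' A) ≤ gaussMeasure A := by
  induction j with
  | zero => rfl
  | succ j ih =>
    rw [Function.iterate_succ, preimage_comp]
    exact (gaussMeasure_preimage_gaussMap_le (measurable_gaussMap.iterate j hA)).trans ih

lemma gaussMeasure_le_volume : gaussMeasure ≤ volume :=
  calc gaussMeasure ≤ (volume.restrict (Ioo 0 1)).withDensity 1 :=
        withDensity_mono <| (ae_restrict_mem measurableSet_Ioo).mono fun x hx =>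
          ENNReal.ofReal_le_one.2 (inv_le_one_of_one_le₀ (by linarith [hx.1]))
    _ = volume.restrict (Ioo 0 1) := withDensity_one
    _ ≤ volume := Measure.restrict_le_self

lemma volume_restrict_le_two_smul_gaussMeasure :
    volume.restrict (Ioo 0 1) ≤ (2 : ℝ≥0∞) • gaussMeasure :=
  calc volume.restrict (Ioo 0 1) = (volume.restrict (Ioo 0 1)).withDensity 1 := withDensity_one.symm
    _ ≤ (volume.restrict (Ioo 0 1)).withDensity ((2 : ℝ≥0∞) • gaussDensity) := by
        refine withDensity_mono <| (ae_restrict_mem measurableSet_Ioo).mono fun x hx => ?_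
        rw [Pi.one_apply, Pi.smul_apply, gaussDensity, smul_eq_mul, ← ENNReal.ofReal_ofNat 2,
          ← ENNReal.ofReal_mul (by norm_num), ENNReal.one_le_ofReal, ← div_eq_mul_inv,
          le_div_iff₀ (by linarith [hx.1])]
        linarith [hx.2]
    _ = 2 • gaussMeasure := withDensity_smul' 2 _ ENNReal.ofNat_ne_top

lemma volume_preimage_iterate_gaussMap_inter_Ioo_le (j : ℕ) {A : Set ℝ} (hA : MeasurableSet A) :
    volume (gaussMap^[j] ⁻¹' A ∩ Ioo 0 1) ≤ 2 * volume A :=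
  calc volume (gaussMap^[j] ⁻¹' A ∩ Ioo 0 1)
      = volume.restrict (Ioo 0 1) (gaussMap^[j] ⁻¹' A) :=
        (Measure.restrict_apply (measurable_gaussMap.iterate j hA)).symm
    _ ≤ 2 * gaussMeasure (gaussMap^[j] ⁻¹' A) := volume_restrict_le_two_smul_gaussMeasure _
    _ ≤ 2 * gaussMeasure A := mul_le_mul_right (gaussMeasure_preimage_iterate_le j hA) 2
    _ ≤ 2 * volume A := mul_le_mul_right (gaussMeasure_le_volume A) 2

lemma volume_setOf_le_theta_succ_le (j : ℕ) {a : ℝ} (ha : 0 < a) :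
    volume {t | t ∈ Ioo 0 1 ∧ a ≤ theta (j + 1) t} ≤ ENNReal.ofReal (2 / a) := by
  have hsub : {t | t ∈ Ioo 0 1 ∧ a ≤ theta (j + 1) t} ⊆ gaussMap^[j] ⁻¹' Icc 0 a⁻¹ ∩ Ioo 0 1 := by
    rintro t ⟨ht, hat⟩
    rw [theta_succ_eq_inv j (Ioo_subset_Ico_self ht)] at hat
    have hpos : 0 < gaussMap^[j] t := inv_pos.1 (ha.trans_le hat)
    exact ⟨⟨hpos.le, (le_inv_comm₀ ha hpos).1 hat⟩, ht⟩
  calc _ ≤ _ := measure_mono hsub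
    _ ≤ 2 * volume (Icc 0 a⁻¹) := volume_preimage_iterate_gaussMap_inter_Ioo_le j measurableSet_Icc
    _ = ENNReal.ofReal (2 / a) := by
        rw [Real.volume_Icc, sub_zero, ← ENNReal.ofReal_ofNat 2,
          ← ENNReal.ofReal_mul (by norm_num), div_eq_mul_inv]

lemma one_sub_two_mul_div_le_volume_real (m : ℕ) {a : ℝ} (ha : 0 < a) :
    1 - 2 * m / a ≤ volume.real {t : ℝ | t ∈ Ioo 0 1 ∧ Irrational t ∧
      ∀ j, 1 ≤ j → j ≤ m → theta j t < a} := by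
  set M := {t : ℝ | t ∈ Ioo 0 1 ∧ Irrational t ∧ ∀ j, 1 ≤ j → j ≤ m → theta j t < a}
  have hcover : Ioo 0 1 \ M ⊆ range ((↑) : ℚ → ℝ) ∪
      ⋃ j ∈ Finset.range m, {t | t ∈ Ioo 0 1 ∧ a ≤ theta (j + 1) t} := by
    rintro t ⟨ht, htM⟩
    by_cases hirr : Irrational t
    · have : ∃ j, 1 ≤ j ∧ j ≤ m ∧ a ≤ theta j t := by
        by_contra! h
        exact htM ⟨ht, hirr, h⟩
      obtain ⟨j, hj1, hjm, haj⟩ := this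
      obtain ⟨i, rfl⟩ : ∃ i, j = i + 1 := ⟨j - 1, by omega⟩
      exact Or.inr (mem_biUnion (Finset.mem_range.2 (by omega)) ⟨ht, haj⟩)
    · exact Or.inl (not_not.1 hirr)
  have hbad : volume (Ioo 0 1 \ M) ≤ ENNReal.ofReal (2 * m / a) :=
    calc volume (Ioo 0 1 \ M)
        ≤ volume (range ((↑) : ℚ → ℝ)) +
            volume (⋃ j ∈ Finset.range m, {t | t ∈ Ioo 0 1 ∧ a ≤ theta (j + 1) t}) :=
          (measure_mono hcover).trans (measure_union_le _ _)
      _ ≤ 0 + ∑ _j ∈ Finset.range m, ENNReal.ofReal (2 / a) :=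
          add_le_add ((countable_range _).measure_zero _).le <|
            (measure_biUnion_finset_le _ _).trans <|
              Finset.sum_le_sum fun j _ => volume_setOf_le_theta_succ_le j ha
      _ = ENNReal.ofReal (2 * m / a) := by
          rw [zero_add, Finset.sum_const, Finset.card_range, nsmul_eq_mul,
            ← ENNReal.ofReal_natCast, ← ENNReal.ofReal_mul (by positivity)]
          ring_nf
  have hbad_real : volume.real (Ioo 0 1 \ M) ≤ 2 * m / a :=
    ENNReal.toReal_le_of_le_ofReal (by positivity) hbad
  calc 1 - 2 * m / a ≤ volume.real (Ioo (0 : ℝ) 1) - volume.real (Ioo 0 1 \ M) := by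
        rw [Real.volume_real_Ioo_of_le zero_le_one, sub_zero]
        linarith
    _ ≤ volume.real (Ioo 0 1 \ (Ioo 0 1 \ M)) :=
        le_measureReal_sdiff (measure_ne_top_of_subset sdiff_subset measure_Ioo_lt_top.ne)
    _ = volume.real M := by rw [sdiff_sdiff_cancel_left fun t ht => ht.1]

end

theorem stmt_17_general (Θ : ℝ → ℝ)
    (hΘtop : Tendsto Θ atTop atTop) :
    Tendsto (fun n : ℕ =>
      (volume {t : ℝ | t ∈ Set.Ioo (0:ℝ) 1 ∧ Irrational t ∧
        ∀ j, 1 ≤ j → j ≤ ⌊4 * Real.log n⌋₊ →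
          theta j t < 1 + ⌊Θ n * Real.log n⌋₊}).toReal)
      atTop (nhds 1) := by
  have hΘn : Tendsto (fun n : ℕ => Θ n) atTop atTop := hΘtop.comp tendsto_natCast_atTop_atTop
  have hlim : Tendsto (fun n : ℕ => 1 - 8 / Θ n) atTop (𝓝 1) := by
    simpa [div_eq_mul_inv] using tendsto_const_nhds.sub (hΘn.inv_tendsto_atTop.const_mul 8)
  refine tendsto_of_tendsto_of_tendsto_of_le_of_le' hlim tendsto_const_nhds ?_
    (Eventually.of_forall fun n => ?_)
  · filter_upwards [eventually_ge_atTop 2, hΘn.eventually_gt_atTop 0] with n hn hΘ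
    have hlog : 0 < Real.log n := Real.log_pos (by exact_mod_cast hn)
    have hm : (⌊4 * Real.log n⌋₊ : ℝ) ≤ 4 * Real.log n := Nat.floor_le (by positivity)
    have ha : Θ n * Real.log n < 1 + ⌊Θ n * Real.log n⌋₊ := by
      linarith [Nat.lt_floor_add_one (Θ n * Real.log n)]
    refine le_trans ?_ (one_sub_two_mul_div_le_volume_real _ (by positivity))
    rw [sub_le_sub_iff_left, div_le_div_iff₀ (by positivity) hΘ]
    nlinarith [mul_pos hΘ hlog]
  · exact (measureReal_mono (fun t ht => ht.1) measure_Ioo_lt_top.ne).trans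
      (by simp [Real.volume_real_Ioo_of_le zero_le_one])

theorem stmt_17 (Θ : ℝ → ℝ)
    (hΘ1 : ∀ x : ℝ, 1 ≤ x → 1 ≤ Θ x)
    (hΘmono : MonotoneOn Θ (Set.Ici (1:ℝ)))
    (hΘtop : Tendsto Θ atTop atTop) :
    Tendsto (fun n : ℕ =>
      (volume {t : ℝ | t ∈ Set.Ioo (0:ℝ) 1 ∧ Irrational t ∧
        ∀ j, 1 ≤ j → j ≤ ⌊4 * Real.log n⌋₊ →
          theta j t < 1 + ⌊Θ n * Real.log n⌋₊}).toReal)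
      atTop (nhds 1) :=
  stmt_17_general Θ hΘtop
end
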